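/- arXiv:1410.0268 — 5 statements merged into one kernel-verified Lean document; each statement's English description precedes it below -/
import Mathlib

section
/- Let u : ℝ^d → ℝ be continuous with u(y) ≤ C(1+|y|)^{s-δ} for some C > 0, δ > 0 and all y ∈ ℝ^d, and assume u is differentiable at x. If there exists y ∈ ℝ^d with u(x+y) < u(x) + y·∇u(x), then there exists an admissible kernel K such that the positive part of ũ_{x,∇u(x)}(y)K(y) has finite integral over ℝ^d while its negative part has infinite integral; consequently the infimum over all admissible kernels K of ∫_{ℝ^d} ũ_{x,∇u(x)}(y)K(y) dy equals -∞. -/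
/-!
Since `u (x + y₀)` lies strictly below the tangent plane, `ũ ≤ -c < 0` on a ball `B(y₀, ε)`.
Take `K(y) = |y - y₀|^{-d-s}`: its superlevel sets are balls centred at `y₀`, so it is admissible
by translation invariance of Lebesgue measure. Its singularity at `y₀` is not integrable, so the
negative part of `ũ K` has infinite integral. The positive part vanishes on `B(y₀, ε)`, and away
from it `ũ` grows at most like `(1 + |y|)^p` with `p = max (s - δ) 1 < s` (the linear term forces
`p ≥ 1`), so `ũ⁺ K ≲ (1 + |y - y₀|)^{-d-(s-p)}` is integrable.
-/

open MeasureTheory Filter Metric Set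
open scoped ENNReal NNReal Topology

noncomputable section

abbrev Ed (d : ℕ) := EuclideanSpace ℝ (Fin d)

/-- Admissible kernels: nonnegative measurable kernels whose distribution function
coincides with that of `|y|^{-d-s}`. -/
def admissibleKernel (d : ℕ) (s : ℝ) : Set (Ed d → ℝ≥0∞) :=
  {K | Measurable K ∧ ∀ r > (0 : ℝ),
    volume {y : Ed d | ENNReal.ofReal (r ^ (-(d : ℝ) - s)) < K y} = volume (ball (0 : Ed d) r)}

/-- `ũ_{x,b}(y) = u(x+y) - u(x) - b·y`. -/
def utilde (d : ℕ) (u : Ed d → ℝ) (x b y : Ed d) : ℝ := u (x + y) - u x - (inner ℝ b y : ℝ)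

/-- The subdifferential of `u` at `x`: slopes of global supporting planes. -/
def subdiff (d : ℕ) (u : Ed d → ℝ) (x : Ed d) : Set (Ed d) :=
  {b | ∀ z, u x + (inner ℝ b (z - x) : ℝ) ≤ u z}

/-- `∫ ũ_{x,b}(y) K(y) dy` (the integrand is nonnegative when `b ∈ ∂u(x)`). -/
def kernelInt (d : ℕ) (u : Ed d → ℝ) (x b : Ed d) (K : Ed d → ℝ≥0∞) : ℝ≥0∞ :=
  ∫⁻ y, ENNReal.ofReal (utilde d u x b y) * K y

open Classical in
/-- The nonlocal Monge–Ampère operator, with values in `[-∞,+∞]`. -/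
def MAop (d : ℕ) (s : ℝ) (u : Ed d → ℝ) (x : Ed d) : EReal :=
  if subdiff d u x = ∅ then ⊥
  else ⨆ b ∈ subdiff d u x, ((⨅ K ∈ admissibleKernel d s, kernelInt d u x b K : ℝ≥0∞) : EReal)

/-- The signed integral `∫ g(y) K(y) dy` as an extended real:
(integral of positive part) minus (integral of negative part). -/
def signedKernelInt (d : ℕ) (g : Ed d → ℝ) (K : Ed d → ℝ≥0∞) : EReal :=
  ((∫⁻ y, ENNReal.ofReal (g y) * K y : ℝ≥0∞) : EReal)
    - ((∫⁻ y, ENNReal.ofReal (-g y) * K y : ℝ≥0∞) : EReal)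

section RieszKernel

variable {X : Type*} [PseudoMetricSpace X]

-- With `ℝ≥0∞` powers the kernel is `⊤` at `y₀`, so its superlevel sets are exactly open balls.
def rieszKernel (y₀ : X) (q : ℝ) (y : X) : ℝ≥0∞ :=
  edist y y₀ ^ (-q)

theorem setOf_ofReal_rpow_neg_lt_rieszKernel {q r : ℝ} (hq : 0 < q) (hr : 0 < r) (y₀ : X) :
    {y | ENNReal.ofReal (r ^ (-q)) < rieszKernel y₀ q y} = ball y₀ r := by
  ext y
  rw [mem_ofPred_eq, rieszKernel, ← ENNReal.ofReal_rpow_of_pos hr, ENNReal.rpow_neg,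
    ENNReal.rpow_neg, ENNReal.inv_lt_inv, ENNReal.rpow_lt_rpow_iff hq, edist_lt_ofReal, mem_ball]

theorem measurable_rieszKernel [MeasurableSpace X] [OpensMeasurableSpace X] (y₀ : X) (q : ℝ) :
    Measurable (rieszKernel y₀ q) :=
  (continuous_id.edist continuous_const).measurable.pow_const _

end RieszKernel

theorem rieszKernel_mem_admissibleKernel {d : ℕ} {s : ℝ} (hds : 0 < (d : ℝ) + s) (y₀ : Ed d) :
    rieszKernel y₀ ((d : ℝ) + s) ∈ admissibleKernel d s := by
  refine ⟨measurable_rieszKernel y₀ _, fun r hr => ?_⟩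
  rw [← neg_add', setOf_ofReal_rpow_neg_lt_rieszKernel hds hr, Measure.addHaar_ball_center]

theorem lintegral_ofReal_mul_eq_top {α : Type*} [MeasurableSpace α] {μ : Measure α}
    {f : α → ℝ} {K : α → ℝ≥0∞} {s : Set α} {c : ℝ} (hs : MeasurableSet s) (hc : 0 < c)
    (hf : ∀ y ∈ s, c ≤ f y) (hK : ∫⁻ y in s, K y ∂μ = ⊤) :
    ∫⁻ y, ENNReal.ofReal (f y) * K y ∂μ = ⊤ := by
  refine top_le_iff.mp ?_
  calc ⊤ = ENNReal.ofReal c * ∫⁻ y in s, K y ∂μ := by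
        rw [hK, ENNReal.mul_top (by simpa using hc)]
    _ = ∫⁻ y in s, ENNReal.ofReal c * K y ∂μ :=
        (lintegral_const_mul' _ _ ENNReal.ofReal_ne_top).symm
    _ ≤ ∫⁻ y in s, ENNReal.ofReal (f y) * K y ∂μ :=
        setLIntegral_mono' hs fun y hy => by gcongr; exact hf y hy
    _ ≤ ∫⁻ y, ENNReal.ofReal (f y) * K y ∂μ := setLIntegral_le_lintegral _ _

theorem one_add_norm_add_rpow_le {G : Type*} [SeminormedAddCommGroup G] {p : ℝ} (hp : 0 ≤ p)
    (x y : G) : (1 + ‖x + y‖) ^ p ≤ (1 + ‖x‖) ^ p * (1 + ‖y‖) ^ p := by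
  rw [← Real.mul_rpow (by positivity) (by positivity)]
  refine Real.rpow_le_rpow (by positivity) ?_ hp
  nlinarith [norm_add_le x y, norm_nonneg x, norm_nonneg y]

theorem rpow_neg_le_mul_one_add_rpow_neg {ε t q : ℝ} (hε : 0 < ε) (hεt : ε ≤ t) (hq : 0 ≤ q) :
    t ^ (-q) ≤ (1 + ε⁻¹) ^ q * (1 + t) ^ (-q) := by
  have ht : 0 < t := hε.trans_le hεt
  have hratio : (1 + t) / t ≤ 1 + ε⁻¹ := by
    rw [add_div, div_self ht.ne', one_div, add_comm]
    gcongr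
  calc t ^ (-q) = ((1 + t) / t) ^ q * (1 + t) ^ (-q) := by
        rw [Real.rpow_neg ht.le, Real.rpow_neg (by positivity),
          Real.div_rpow (by positivity) ht.le]
        field_simp
    _ ≤ (1 + ε⁻¹) ^ q * (1 + t) ^ (-q) := by gcongr

section Integrals

variable {E : Type*} [NormedAddCommGroup E] [NormedSpace ℝ E] [FiniteDimensional ℝ E]
  [MeasurableSpace E] [BorelSpace E] {μ : Measure E} [μ.IsAddHaarMeasure]

theorem setLIntegral_ball_rieszKernel_eq_top {q ε : ℝ} (hq : Module.finrank ℝ E < q)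
    (hε : 0 < ε) (y₀ : E) : ∫⁻ y in ball y₀ ε, rieszKernel y₀ q y ∂μ = ⊤ := by
  set n : ℝ := (Module.finrank ℝ E : ℝ)
  have hq0 : 0 < q := lt_of_le_of_lt (Nat.cast_nonneg _) hq
  have hv₀ : μ (ball 0 1) ≠ 0 := (measure_ball_pos μ _ one_pos).ne'
  have hv : μ (ball 0 1) ≠ ⊤ := measure_ball_lt_top.ne
  have hlower : ∀ r ∈ Ioc 0 ε,
      ENNReal.ofReal r ^ (n - q) * μ (ball 0 1) ≤ ∫⁻ y in ball y₀ ε, rieszKernel y₀ q y ∂μ := by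
    rintro r ⟨hr, hrε⟩
    have hr' : ENNReal.ofReal r ≠ 0 := by simpa using hr
    calc ENNReal.ofReal r ^ (n - q) * μ (ball 0 1)
        = ENNReal.ofReal r ^ (-q) * μ (ball y₀ r) := by
          rw [Measure.addHaar_ball_of_pos μ y₀ hr, ENNReal.ofReal_pow hr.le,
            ← ENNReal.rpow_natCast, ← mul_assoc, ← ENNReal.rpow_add _ _ hr' ENNReal.ofReal_ne_top,
            neg_add_eq_sub]
      _ = ∫⁻ _ in ball y₀ r, ENNReal.ofReal r ^ (-q) ∂μ := (setLIntegral_const _ _).symm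
      _ ≤ ∫⁻ y in ball y₀ r, rieszKernel y₀ q y ∂μ := by
          refine setLIntegral_mono (measurable_rieszKernel y₀ q) fun y hy => ?_
          rw [← setOf_ofReal_rpow_neg_lt_rieszKernel hq0 hr y₀, mem_ofPred_eq,
            ← ENNReal.ofReal_rpow_of_pos hr] at hy
          exact hy.le
      _ ≤ ∫⁻ y in ball y₀ ε, rieszKernel y₀ q y ∂μ :=
          lintegral_mono_set (ball_subset_ball hrε)
  have hlim : Tendsto (fun r => ENNReal.ofReal r ^ (n - q) * μ (ball 0 1)) (𝓝[>] 0) (𝓝 ⊤) := by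
    have h : Tendsto (fun r => ENNReal.ofReal r ^ (n - q)) (𝓝[>] 0) (𝓝 ⊤) := by
      have h0 : Tendsto ENNReal.ofReal (𝓝[>] 0) (𝓝 0) := by
        simpa using (ENNReal.continuous_ofReal.tendsto 0).mono_left nhdsWithin_le_nhds
      have := ((ENNReal.continuous_rpow_const (y := n - q)).tendsto 0).comp h0
      rwa [ENNReal.zero_rpow_of_neg (by linarith)] at this
    simpa [ENNReal.top_mul hv₀] using ENNReal.Tendsto.mul_const h (.inr hv)
  exact top_le_iff.mp <| le_of_tendsto hlim <|
    eventually_of_mem (Ioc_mem_nhdsGT hε) hlower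

theorem lintegral_ofReal_mul_rieszKernel_lt_top {g : E → ℝ} {y₀ : E} {ε A p q : ℝ}
    (hε : 0 < ε) (hA : 0 ≤ A) (hp : 0 ≤ p) (hpq : Module.finrank ℝ E + p < q)
    (hball : ∀ y ∈ ball y₀ ε, g y ≤ 0) (hg : ∀ y, g y ≤ A * (1 + ‖y‖) ^ p) :
    ∫⁻ y, ENNReal.ofReal (g y) * rieszKernel y₀ q y ∂μ < ⊤ := by
  have hq : 0 ≤ q := by linarith [(Module.finrank ℝ E).cast_nonneg (α := ℝ)]
  set M := A * (1 + ‖y₀‖) ^ p * (1 + ε⁻¹) ^ q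
  have hM : 0 ≤ M := by positivity
  have hbound : ∀ y, ENNReal.ofReal (g y) * rieszKernel y₀ q y ≤
      ENNReal.ofReal (M * (1 + ‖y - y₀‖) ^ (-(q - p))) := by
    intro y
    by_cases hy : y ∈ ball y₀ ε
    · simp [ENNReal.ofReal_eq_zero.mpr (hball y hy)]
    set t := ‖y - y₀‖
    have hεt : ε ≤ t := by simpa [dist_eq_norm] using hy
    have hK : rieszKernel y₀ q y = ENNReal.ofReal (t ^ (-q)) := by
      rw [rieszKernel, edist_dist, dist_eq_norm, ENNReal.ofReal_rpow_of_pos (hε.trans_le hεt)]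
    rw [hK, ← ENNReal.ofReal_mul' (by positivity)]
    refine ENNReal.ofReal_le_ofReal ?_
    calc g y * t ^ (-q) ≤ A * (1 + ‖y‖) ^ p * t ^ (-q) :=
          mul_le_mul_of_nonneg_right (hg y) (by positivity)
      _ ≤ A * ((1 + ‖y₀‖) ^ p * (1 + t) ^ p) * ((1 + ε⁻¹) ^ q * (1 + t) ^ (-q)) := by
          gcongr
          · simpa using one_add_norm_add_rpow_le hp y₀ (y - y₀)
          · exact rpow_neg_le_mul_one_add_rpow_neg hε hεt hq
      _ = M * (1 + t) ^ (-(q - p)) := by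
          rw [show -(q - p) = p + -q by ring, Real.rpow_add (by positivity)]
          ring
  calc ∫⁻ y, ENNReal.ofReal (g y) * rieszKernel y₀ q y ∂μ
      ≤ ∫⁻ y, ENNReal.ofReal (M * (1 + ‖y - y₀‖) ^ (-(q - p))) ∂μ := lintegral_mono hbound
    _ = ∫⁻ z, ENNReal.ofReal (M * (1 + ‖z‖) ^ (-(q - p))) ∂μ :=
        lintegral_sub_right_eq_self (fun z => ENNReal.ofReal (M * (1 + ‖z‖) ^ (-(q - p)))) y₀
    _ = ENNReal.ofReal M * ∫⁻ z, ENNReal.ofReal ((1 + ‖z‖) ^ (-(q - p))) ∂μ := by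
        simp_rw [ENNReal.ofReal_mul hM]
        exact lintegral_const_mul' _ _ ENNReal.ofReal_ne_top
    _ < ⊤ := ENNReal.mul_lt_top ENNReal.ofReal_lt_top (finite_integral_one_add_norm (by linarith))

end Integrals

theorem utilde_le_mul_one_add_norm_rpow {d : ℕ} {u : Ed d → ℝ} {C q p : ℝ} (hC : 0 ≤ C)
    (hqp : q ≤ p) (hp : 1 ≤ p) (hu : ∀ y, u y ≤ C * (1 + ‖y‖) ^ q) (x b y : Ed d) :
    utilde d u x b y ≤ (C * (1 + ‖x‖) ^ p + |u x| + ‖b‖) * (1 + ‖y‖) ^ p := by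
  have hy1 : (1 : ℝ) ≤ 1 + ‖y‖ := le_add_of_nonneg_right (norm_nonneg y)
  have hux : u (x + y) ≤ C * (1 + ‖x‖) ^ p * (1 + ‖y‖) ^ p := by
    calc u (x + y) ≤ C * (1 + ‖x + y‖) ^ q := hu _
      _ ≤ C * (1 + ‖x + y‖) ^ p := by gcongr; exact le_add_of_nonneg_right (norm_nonneg _)
      _ ≤ C * ((1 + ‖x‖) ^ p * (1 + ‖y‖) ^ p) := by
          gcongr; exact one_add_norm_add_rpow_le (by linarith) x y
      _ = C * (1 + ‖x‖) ^ p * (1 + ‖y‖) ^ p := by ring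
  have hux₀ : -u x ≤ |u x| * (1 + ‖y‖) ^ p :=
    (neg_le_abs _).trans <|
      le_mul_of_one_le_right (abs_nonneg _) (Real.one_le_rpow hy1 (by linarith))
  have hnorm : ‖y‖ ≤ (1 + ‖y‖) ^ p :=
    calc ‖y‖ ≤ (1 + ‖y‖) ^ (1 : ℝ) := by rw [Real.rpow_one]; linarith
      _ ≤ (1 + ‖y‖) ^ p := Real.rpow_le_rpow_of_exponent_le hy1 hp
  have hinner : -inner ℝ b y ≤ ‖b‖ * (1 + ‖y‖) ^ p :=
    (neg_le_abs _).trans ((abs_real_inner_le_norm b y).trans (by gcongr))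
  rw [utilde]
  linear_combination hux + hux₀ + hinner

theorem signedKernelInt_eq_bot {d : ℕ} {g : Ed d → ℝ} {K : Ed d → ℝ≥0∞}
    (h : ∫⁻ y, ENNReal.ofReal (-g y) * K y = ⊤) : signedKernelInt d g K = ⊥ := by
  rw [signedKernelInt, h, EReal.coe_ennreal_top, EReal.sub_top]

theorem stmt1_general (d : ℕ) (s : ℝ) (hs : s ∈ Set.Ioo (1 : ℝ) 2)
    (u : Ed d → ℝ) (hu : Continuous u) (C δ : ℝ) (hC : 0 < C) (hδ : 0 < δ)
    (hgrowth : ∀ y : Ed d, u y ≤ C * (1 + ‖y‖) ^ (s - δ))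
    (x : Ed d)
    (hy : ∃ y : Ed d, u (x + y) < u x + (inner ℝ (gradient u x) y : ℝ)) :
    (∃ K ∈ admissibleKernel d s,
        (∫⁻ y, ENNReal.ofReal (utilde d u x (gradient u x) y) * K y) < ⊤ ∧
        (∫⁻ y, ENNReal.ofReal (-(utilde d u x (gradient u x) y)) * K y) = ⊤) ∧
      (⨅ K ∈ admissibleKernel d s, signedKernelInt d (utilde d u x (gradient u x)) K)
        = (⊥ : EReal) := by
  obtain ⟨y₀, hy₀⟩ := hy
  set g := utilde d u x (gradient u x)
  have hg : Continuous g := by unfold g utilde; fun_prop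
  have hgy₀ : g y₀ < 0 := by simp only [g, utilde]; linarith
  obtain ⟨ε, hε, hball⟩ : ∃ ε > 0, ∀ y ∈ ball y₀ ε, g y < g y₀ / 2 :=
    eventually_nhds_iff_ball.mp (hg.continuousAt.eventually_lt continuousAt_const (by linarith))
  have hgrow := utilde_le_mul_one_add_norm_rpow (p := max (s - δ) 1) (x := x)
    (b := gradient u x) hC.le (le_max_left _ _) (le_max_right _ _) hgrowth
  have hdim : (Module.finrank ℝ (Ed d) : ℝ) = d := by simp
  set K := rieszKernel y₀ ((d : ℝ) + s)
  have hK : K ∈ admissibleKernel d s := rieszKernel_mem_admissibleKernel (by linarith [hs.1]) y₀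
  have hneg : ∫⁻ y, ENNReal.ofReal (-g y) * K y = ⊤ :=
    lintegral_ofReal_mul_eq_top measurableSet_ball (c := -g y₀ / 2) (by linarith)
      (fun y hy => by linarith [hball y hy])
      (setLIntegral_ball_rieszKernel_eq_top (by rw [hdim]; linarith [hs.1]) hε y₀)
  have hpos : ∫⁻ y, ENNReal.ofReal (g y) * K y < ⊤ :=
    lintegral_ofReal_mul_rieszKernel_lt_top hε (by positivity) (by positivity)
      (by rw [hdim]; linarith [max_lt (by linarith : s - δ < s) hs.1])
      (fun y hy => by linarith [hball y hy]) hgrow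
  exact ⟨⟨K, hK, hpos, hneg⟩,
    le_bot_iff.mp ((iInf₂_le K hK).trans_eq (signedKernelInt_eq_bot hneg))⟩

/-- If `u` grows slower than `|y|^{s-δ}` and fails to have a supporting plane at `x`
(i.e. `u(x+y) < u(x) + y·∇u(x)` for some `y`), then there is an admissible kernel for which
the positive part of `ũ_{x,∇u(x)} K` has finite integral while the negative part has infinite
integral; consequently the infimum over admissible kernels of `∫ ũ_{x,∇u(x)}(y) K(y) dy`
is `-∞`. -/
theorem stmt1 (d : ℕ) (hd : 1 ≤ d) (s : ℝ) (hs : s ∈ Set.Ioo (1 : ℝ) 2)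
    (u : Ed d → ℝ) (hu : Continuous u) (C δ : ℝ) (hC : 0 < C) (hδ : 0 < δ)
    (hgrowth : ∀ y : Ed d, u y ≤ C * (1 + ‖y‖) ^ (s - δ))
    (x : Ed d) (hdiff : DifferentiableAt ℝ u x)
    (hy : ∃ y : Ed d, u (x + y) < u x + (inner ℝ (gradient u x) y : ℝ)) :
    (∃ K ∈ admissibleKernel d s,
        (∫⁻ y, ENNReal.ofReal (utilde d u x (gradient u x) y) * K y) < ⊤ ∧
        (∫⁻ y, ENNReal.ofReal (-(utilde d u x (gradient u x) y)) * K y) = ⊤) ∧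
      (⨅ K ∈ admissibleKernel d s, signedKernelInt d (utilde d u x (gradient u x)) K)
        = (⊥ : EReal) :=
  stmt1_general d s hs u hu C δ hC hδ hgrowth x hy
end
end

section
/- Let u : ℝ^d → ℝ be continuous with u(y) ≤ C(1+|y|)^{s-δ} for some C > 0, δ > 0 and all y ∈ ℝ^d. Assume u is differentiable at x, that ∇u(x) ∈ ∂u(x) (i.e., u has a supporting plane at x), and that u is C^{1,1} at x, i.e., there exists C₁ > 0 with u(x+y) - u(x) - y·∇u(x) ≤ C₁|y|² for all |y| ≤ 1. Then MA u(x) is a finite nonnegative real number. -/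
open MeasureTheory Filter Metric Set
open scoped ENNReal NNReal Topology

noncomputable section

/-! Differentiability at `x` together with a supporting plane forces `∂u(x) = {∇u(x)}`, so
`MA u(x)` is an infimum of nonnegative integrals, and it suffices to exhibit one admissible kernel
with finite integral. The kernel `|y|^{-d-s}` is admissible. Near `0`, `ũ ≤ C₁|y|²` makes the
integral converge because `s < 2`; at infinity, `ũ ≲ (1+|y|)^{max(s-δ,1)}` makes it converge
because `max(s-δ,1) < s`. -/

section Integrability

variable {E : Type*} [NormedAddCommGroup E] [NormedSpace ℝ E] [FiniteDimensional ℝ E]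
  [MeasurableSpace E] [BorelSpace E] {μ : Measure E} [μ.IsAddHaarMeasure]

theorem setLIntegral_ball_ofReal_mul_rpow_norm_lt_top (hE : 1 ≤ Module.finrank ℝ E)
    {f : E → ℝ} {B s : ℝ} (hB : 0 ≤ B) (hs : s < 2)
    (hf : ∀ y ∈ ball (0 : E) 1, f y ≤ B * ‖y‖ ^ 2) :
    ∫⁻ y in ball (0 : E) 1,
      ENNReal.ofReal (f y) * ENNReal.ofReal (‖y‖ ^ (-(Module.finrank ℝ E : ℝ) - s)) ∂μ < ∞ := by
  set e : ℝ := -(Module.finrank ℝ E : ℝ) - s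
  have hint : IntegrableOn (fun y : E ↦ B * ‖y‖ ^ (2 + e)) (ball 0 1) μ := by
    refine integrableOn_ball_of_norm_le_rpow hE (C := B) (α := -(2 + e)) (by linarith)
      (ae_of_all _ fun y ↦ ?_)
      ((measurable_norm.pow_const _).const_mul B).aestronglyMeasurable
    rw [neg_neg, Real.norm_of_nonneg (by positivity)]
  refine lt_of_le_of_lt (setLIntegral_mono' measurableSet_ball fun y hy ↦ ?_)
    hint.setLIntegral_lt_top
  calc ENNReal.ofReal (f y) * ENNReal.ofReal (‖y‖ ^ e)
      ≤ ENNReal.ofReal (B * ‖y‖ ^ (2 : ℝ)) * ENNReal.ofReal (‖y‖ ^ e) := by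
        gcongr
        rw [Real.rpow_two]
        exact hf y hy
    _ = ENNReal.ofReal (B * (‖y‖ ^ (2 : ℝ) * ‖y‖ ^ e)) := by
        rw [← ENNReal.ofReal_mul' (by positivity), mul_assoc]
    _ ≤ ENNReal.ofReal (B * ‖y‖ ^ (2 + e)) := by
        gcongr
        exact Real.le_rpow_add (norm_nonneg y) _ _

theorem rpow_le_two_rpow_neg_mul_one_add_rpow {t e : ℝ} (ht : 1 ≤ t) (he : e ≤ 0) :
    t ^ e ≤ 2 ^ (-e) * (1 + t) ^ e := by
  calc t ^ e ≤ ((1 + t) / 2) ^ e := Real.rpow_le_rpow_of_nonpos (by positivity) (by linarith) he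
    _ = 2 ^ (-e) * (1 + t) ^ e := by
        rw [Real.div_rpow (by positivity) zero_le_two, Real.rpow_neg zero_le_two, div_eq_inv_mul]

theorem setLIntegral_compl_ball_ofReal_mul_rpow_norm_lt_top
    {f : E → ℝ} {A p s : ℝ} (hA : 0 ≤ A) (hs : 0 ≤ s) (hps : p < s)
    (hf : ∀ y, f y ≤ A * (1 + ‖y‖) ^ p) :
    ∫⁻ y in (ball (0 : E) 1)ᶜ,
      ENNReal.ofReal (f y) * ENNReal.ofReal (‖y‖ ^ (-(Module.finrank ℝ E : ℝ) - s)) ∂μ < ∞ := by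
  set n : ℝ := (Module.finrank ℝ E : ℝ)
  set M : ℝ := A * 2 ^ (n + s)
  have hdecay : ∫⁻ y, ENNReal.ofReal ((1 + ‖y‖) ^ (-(n + s - p))) ∂μ < ∞ :=
    finite_integral_one_add_norm (by linarith)
  calc ∫⁻ y in (ball (0 : E) 1)ᶜ, ENNReal.ofReal (f y) * ENNReal.ofReal (‖y‖ ^ (-n - s)) ∂μ
      ≤ ∫⁻ y in (ball (0 : E) 1)ᶜ, ENNReal.ofReal (M * (1 + ‖y‖) ^ (-(n + s - p))) ∂μ := by
        refine setLIntegral_mono' measurableSet_ball.compl fun y hy ↦ ?_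
        have hy1 : 1 ≤ ‖y‖ := by simpa using hy
        have hpos : 0 < 1 + ‖y‖ := by positivity
        calc ENNReal.ofReal (f y) * ENNReal.ofReal (‖y‖ ^ (-n - s))
            ≤ ENNReal.ofReal (A * (1 + ‖y‖) ^ p) *
                ENNReal.ofReal (2 ^ (n + s) * (1 + ‖y‖) ^ (-n - s)) := by
              gcongr
              · exact hf y
              · have hn : 0 ≤ n := Nat.cast_nonneg _
                have := rpow_le_two_rpow_neg_mul_one_add_rpow (e := -n - s) hy1 (by linarith)
                rwa [neg_sub, sub_neg_eq_add, add_comm s] at this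
          _ = ENNReal.ofReal (M * (1 + ‖y‖) ^ (-(n + s - p))) := by
              rw [← ENNReal.ofReal_mul (by positivity)]
              congr 1
              rw [show -(n + s - p) = p + (-n - s) by ring, Real.rpow_add hpos]
              ring
    _ ≤ ∫⁻ y, ENNReal.ofReal (M * (1 + ‖y‖) ^ (-(n + s - p))) ∂μ := setLIntegral_le_lintegral _ _
    _ = ENNReal.ofReal M * ∫⁻ y, ENNReal.ofReal ((1 + ‖y‖) ^ (-(n + s - p))) ∂μ := by
        simp_rw [ENNReal.ofReal_mul (by positivity : 0 ≤ M)]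
        exact lintegral_const_mul' _ _ ENNReal.ofReal_ne_top
    _ < ∞ := ENNReal.mul_lt_top ENNReal.ofReal_lt_top hdecay

theorem lintegral_ofReal_mul_rpow_norm_lt_top (hE : 1 ≤ Module.finrank ℝ E)
    {f : E → ℝ} {A B p s : ℝ} (hA : 0 ≤ A) (hB : 0 ≤ B) (hs0 : 0 ≤ s) (hs2 : s < 2)
    (hps : p < s) (hnear : ∀ y ∈ ball (0 : E) 1, f y ≤ B * ‖y‖ ^ 2)
    (hfar : ∀ y, f y ≤ A * (1 + ‖y‖) ^ p) :
    ∫⁻ y, ENNReal.ofReal (f y) * ENNReal.ofReal (‖y‖ ^ (-(Module.finrank ℝ E : ℝ) - s)) ∂μ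
      < ∞ := by
  rw [← lintegral_add_compl _ measurableSet_ball]
  exact ENNReal.add_lt_top.2
    ⟨setLIntegral_ball_ofReal_mul_rpow_norm_lt_top hE hB hs2 hnear,
      setLIntegral_compl_ball_ofReal_mul_rpow_norm_lt_top hA hs0 hps hfar⟩

end Integrability

section InnerProductSpace

variable {F : Type*} [NormedAddCommGroup F] [InnerProductSpace ℝ F]

theorem eq_of_hasGradientAt_of_forall_add_inner_le [CompleteSpace F] {u : F → ℝ} {x b g : F}
    (hg : HasGradientAt u g x) (hb : ∀ z, u x + inner ℝ b (z - x) ≤ u z) : b = g := by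
  have hmin : IsLocalMin (fun z ↦ u z - inner ℝ b z) x :=
    IsMinOn.isLocalMin (fun z _ ↦ by
      have := hb z
      rw [inner_sub_right] at this
      simp only [mem_ofPred_eq]
      linarith) univ_mem
  have hderiv := DFunLike.congr_fun
    (hmin.hasFDerivAt_eq_zero (hg.hasFDerivAt.sub (innerSL ℝ b).hasFDerivAt)) (g - b)
  simp only [sub_apply, InnerProductSpace.toDual_apply_apply, innerSL_apply_apply, zero_apply,
    ← inner_sub_left] at hderiv
  exact (sub_eq_zero.mp (inner_self_eq_zero.mp hderiv)).symm

theorem exists_sub_sub_inner_le_mul_one_add_norm_rpow {u : F → ℝ} {C q : ℝ} (hC : 0 ≤ C)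
    (hu : ∀ y, u y ≤ C * (1 + ‖y‖) ^ q) (x b : F) :
    ∃ A, 0 ≤ A ∧ ∀ y, u (x + y) - u x - inner ℝ b y ≤ A * (1 + ‖y‖) ^ max q 1 := by
  set p := max q 1
  refine ⟨C * (1 + ‖x‖) ^ p + |u x| + ‖b‖, by positivity, fun y ↦ ?_⟩
  have hy1 : 1 ≤ 1 + ‖y‖ := by simp
  have hpow : 1 + ‖y‖ ≤ (1 + ‖y‖) ^ p := by
    simpa using Real.rpow_le_rpow_of_exponent_le hy1 (le_max_right q 1)
  have hux : u (x + y) ≤ C * (1 + ‖x‖) ^ p * (1 + ‖y‖) ^ p := by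
    calc u (x + y) ≤ C * (1 + ‖x + y‖) ^ q := hu (x + y)
      _ ≤ C * (1 + ‖x + y‖) ^ p := by
        gcongr
        · simp
        · exact le_max_left q 1
      _ ≤ C * ((1 + ‖x‖) * (1 + ‖y‖)) ^ p := by
        gcongr
        nlinarith [norm_add_le x y, norm_nonneg x, norm_nonneg y]
      _ = C * (1 + ‖x‖) ^ p * (1 + ‖y‖) ^ p := by
        rw [Real.mul_rpow (by positivity) (by positivity), mul_assoc]
  have hlin : -inner ℝ b y ≤ ‖b‖ * (1 + ‖y‖) ^ p := by
    calc -inner ℝ b y ≤ ‖b‖ * ‖y‖ := (neg_le_abs _).trans (abs_real_inner_le_norm b y)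
      _ ≤ ‖b‖ * (1 + ‖y‖) ^ p := by gcongr; linarith
  have hconst : -u x ≤ |u x| * (1 + ‖y‖) ^ p :=
    (neg_le_abs _).trans (le_mul_of_one_le_right (abs_nonneg _) (by linarith))
  linarith

end InnerProductSpace

theorem subdiff_eq_singleton_gradient {d : ℕ} {u : Ed d → ℝ} {x : Ed d}
    (hdiff : DifferentiableAt ℝ u x) (hsupp : gradient u x ∈ subdiff d u x) :
    subdiff d u x = {gradient u x} :=
  Subset.antisymm (fun _ hb ↦ eq_of_hasGradientAt_of_forall_add_inner_le hdiff.hasGradientAt hb)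
    (singleton_subset_iff.mpr hsupp)

theorem MAop_eq_of_subdiff_eq_singleton {d : ℕ} {s : ℝ} {u : Ed d → ℝ} {x b : Ed d}
    (h : subdiff d u x = {b}) :
    MAop d s u x = ((⨅ K ∈ admissibleKernel d s, kernelInt d u x b K : ℝ≥0∞) : EReal) := by
  rw [MAop, if_neg (h ▸ singleton_ne_empty b), h, iSup_singleton]

theorem ofReal_rpow_norm_mem_admissibleKernel {d : ℕ} (hd : 1 ≤ d) {s : ℝ} (hs : 0 < s) :
    (fun y : Ed d ↦ ENNReal.ofReal (‖y‖ ^ (-(d : ℝ) - s))) ∈ admissibleKernel d s := by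
  have : Nonempty (Fin d) := Fin.pos_iff_nonempty.mp hd
  have he : -(d : ℝ) - s < 0 := by linarith [(Nat.cast_nonneg d : (0 : ℝ) ≤ d)]
  refine ⟨by fun_prop, fun r hr ↦ ?_⟩
  suffices {y : Ed d | ENNReal.ofReal (r ^ (-(d : ℝ) - s)) < ENNReal.ofReal (‖y‖ ^ (-(d : ℝ) - s))}
      = ball 0 r \ {0} by
    rw [this, measure_sdiff_null (measure_singleton _)]
  ext y
  rcases eq_or_ne y 0 with rfl | hy
  · simp [Real.zero_rpow he.ne]
  · simp [ENNReal.ofReal_lt_ofReal_iff (Real.rpow_pos_of_pos (norm_pos_iff.mpr hy) _),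
      Real.rpow_lt_rpow_iff_of_neg hr (norm_pos_iff.mpr hy) he, hy]

theorem stmt2_general (d : ℕ) (hd : 1 ≤ d) (s : ℝ) (hs : s ∈ Set.Ioo (1 : ℝ) 2)
    (u : Ed d → ℝ) (C δ : ℝ) (hC : 0 < C) (hδ : 0 < δ)
    (hgrowth : ∀ y : Ed d, u y ≤ C * (1 + ‖y‖) ^ (s - δ))
    (x : Ed d) (hdiff : DifferentiableAt ℝ u x)
    (hsupp : gradient u x ∈ subdiff d u x)
    (C₁ : ℝ) (hC₁ : 0 < C₁)
    (hC11 : ∀ y : Ed d, ‖y‖ ≤ 1 →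
      u (x + y) - u x - (inner ℝ (gradient u x) y : ℝ) ≤ C₁ * ‖y‖ ^ 2) :
    ∃ m : ℝ, 0 ≤ m ∧ MAop d s u x = (m : EReal) := by
  obtain ⟨hs1, hs2⟩ := hs
  obtain ⟨A, hA, hfar⟩ :=
    exists_sub_sub_inner_le_mul_one_add_norm_rpow hC.le hgrowth x (gradient u x)
  have hfin : kernelInt d u x (gradient u x)
      (fun y ↦ ENNReal.ofReal (‖y‖ ^ (-(d : ℝ) - s))) < ∞ := by
    have := lintegral_ofReal_mul_rpow_norm_lt_top (μ := volume) (by simpa using hd) hA hC₁.le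
      (by linarith) hs2 (max_lt (by linarith) hs1) (fun y hy ↦ hC11 y (mem_ball_zero_iff.mp hy).le)
      hfar
    simpa only [kernelInt, utilde, finrank_euclideanSpace_fin] using this
  have hinf : (⨅ K ∈ admissibleKernel d s, kernelInt d u x (gradient u x) K) ≠ ∞ :=
    ne_top_of_le_ne_top hfin.ne
      (iInf₂_le _ (ofReal_rpow_norm_mem_admissibleKernel hd (by linarith)))
  exact ⟨_, ENNReal.toReal_nonneg, by
    rw [MAop_eq_of_subdiff_eq_singleton (subdiff_eq_singleton_gradient hdiff hsupp),
      EReal.coe_ennreal_toReal hinf]⟩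

/-- If `u` grows slower than `|y|^{s-δ}`, has a supporting plane at `x` with slope `∇u(x)`,
and is `C^{1,1}` at `x`, then `MA u(x)` is a finite nonnegative real number. -/
theorem stmt2 (d : ℕ) (hd : 1 ≤ d) (s : ℝ) (hs : s ∈ Set.Ioo (1 : ℝ) 2)
    (u : Ed d → ℝ) (hu : Continuous u) (C δ : ℝ) (hC : 0 < C) (hδ : 0 < δ)
    (hgrowth : ∀ y : Ed d, u y ≤ C * (1 + ‖y‖) ^ (s - δ))
    (x : Ed d) (hdiff : DifferentiableAt ℝ u x)
    (hsupp : gradient u x ∈ subdiff d u x)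
    (C₁ : ℝ) (hC₁ : 0 < C₁)
    (hC11 : ∀ y : Ed d, ‖y‖ ≤ 1 →
      u (x + y) - u x - (inner ℝ (gradient u x) y : ℝ) ≤ C₁ * ‖y‖ ^ 2) :
    ∃ m : ℝ, 0 ≤ m ∧ MAop d s u x = (m : EReal) :=
  stmt2_general d hd s hs u C δ hC hδ hgrowth x hdiff hsupp C₁ hC₁ hC11
end
end

section
/- Let u : ℝ^d → ℝ, x ∈ ℝ^d and b ∈ ∂u(x), so that ũ_{x,b} ≥ 0. If the Lebesgue measure of {y : ũ_{x,b}(y) < λ} is infinite for every λ > 0, then the infimum over all admissible kernels K of ∫_{ℝ^d} ũ_{x,b}(y) K(y) dy equals zero. -/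
open MeasureTheory Filter Metric Set
open scoped ENNReal NNReal Topology

noncomputable section

/-!
Each sublevel set `{ũ < λ}` has infinite measure, so one can choose disjoint measurable pieces
`T n` (`n ∈ ℤ`) of measure `2 ^ n`, `T n` inside the measurable hull of `{ũ < λ n}`. Ordering each
piece by distance to the origin and stacking the pieces gives a rank `ρ` on `⋃ n, T n` which is
uniformly distributed on `(0, ∞)` and at least `2 ^ n` on `T n`. The kernel
`K = (ρ / |B₁|) ^ (-(d + s) / d)` on `⋃ n, T n`, `0` elsewhere, is then a rearrangement of
`|y| ^ (-d - s)`, hence admissible, and `∫ ũ K ≤ ∑ λ n * (2 ^ n / |B₁|) ^ (-(d + s) / d) * 2 ^ n`,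
which is arbitrarily small for suitable `λ n`.
-/
open Function Encodable

section RealLine

variable {ν : Measure ℝ}

theorem measure_Iio_le_of_forall_lt {t : ℝ} {a : ℝ≥0∞} (h : ∀ s < t, ν (Iio s) ≤ a) :
    ν (Iio t) ≤ a := by
  obtain ⟨u, hu_mono, hu_lt, hu_lim⟩ := exists_seq_strictMono_tendsto t
  have hIio : Iio t = ⋃ n, Iio (u n) := by
    refine Subset.antisymm (fun z hz => ?_) (iUnion_subset fun n => Iio_subset_Iio (hu_lt n).le)
    obtain ⟨n, hn⟩ := (hu_lim.eventually (lt_mem_nhds hz)).exists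
    exact mem_iUnion.2 ⟨n, hn⟩
  rw [hIio, (monotone_Iio.comp hu_mono.monotone).measure_iUnion (s := fun n => Iio (u n))]
  exact iSup_le fun n => h _ (hu_lt n)

theorem le_measure_Iio_of_forall_gt [NullSingletonClass ν] (hfin : ∀ s, ν (Iio s) ≠ ∞) {t : ℝ}
    {a : ℝ≥0∞} (h : ∀ s > t, a ≤ ν (Iio s)) : a ≤ ν (Iio t) := by
  obtain ⟨u, hu_anti, hu_gt, hu_lim⟩ := exists_seq_strictAnti_tendsto t
  have hIic : Iic t = ⋂ n, Iio (u n) := by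
    refine Subset.antisymm (subset_iInter fun n => Iic_subset_Iio.2 (hu_gt n)) fun z hz => ?_
    exact ge_of_tendsto' hu_lim fun n => (mem_iInter.1 hz n).le
  rw [measure_congr Iio_ae_eq_Iic, hIic,
    (monotone_Iio.comp_antitone hu_anti.antitone).measure_iInter (s := fun n => Iio (u n))
      (fun n => measurableSet_Iio.nullMeasurableSet) ⟨0, hfin _⟩]
  exact le_iInf fun n => h _ (hu_gt n)

/-- The distribution function `t ↦ ν (Iio t)` pushes `ν` forward to Lebesgue measure on
`[0, ν univ)`. -/
theorem measure_setOf_measure_Iio_lt [NullSingletonClass ν] (hfin : ∀ t, ν (Iio t) ≠ ∞) {a : ℝ≥0∞} :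
    ν {t | ν (Iio t) < a} = min a (ν univ) := by
  set X := {t | ν (Iio t) < a}
  have hX : ∀ ⦃s t⦄, s ≤ t → t ∈ X → s ∈ X := fun s t hst ht =>
    (measure_mono (Iio_subset_Iio hst)).trans_lt ht
  by_cases hbdd : BddAbove X
  · rcases X.eq_empty_or_nonempty with hempty | hne
    · have ha : a ≤ 0 := by
        have hinter : ⋂ t : ℝ, Iio t = ∅ := iInter_Iio_of_not_bddBelow_range (by simp)
        rw [← measure_empty (μ := ν), ← hinter, monotone_Iio.measure_iInter
          (fun t => measurableSet_Iio.nullMeasurableSet) ⟨0, hfin 0⟩]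
        exact le_iInf fun t => not_lt.1 fun ht => hempty.subset ht
      rw [hempty, nonpos_iff_eq_zero.1 ha, measure_empty, zero_min]
    · set t₀ := sSup X
      have hIio : Iio t₀ ⊆ X := fun s hs =>
        let ⟨t, htX, hst⟩ := exists_lt_of_lt_csSup hne hs
        hX hst.le htX
      have hXt₀ : ν X = ν (Iio t₀) := le_antisymm
        ((measure_mono fun s hs => le_csSup hbdd hs).trans (measure_congr Iio_ae_eq_Iic).ge)
        (measure_mono hIio)
      have ht₀ : ν (Iio t₀) = a := le_antisymm
        (measure_Iio_le_of_forall_lt fun s hs => (hIio hs).le)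
        (le_measure_Iio_of_forall_gt hfin fun s hs =>
          not_lt.1 fun hsX => (le_csSup hbdd hsX).not_gt hs)
      rw [hXt₀, ht₀, min_eq_left (ht₀ ▸ measure_mono (subset_univ _))]
  · have hXuniv : X = univ := eq_univ_of_forall fun t =>
      let ⟨s, hsX, hts⟩ := not_bddAbove_iff.1 hbdd t
      hX hts.le hsX
    have hle : ν univ ≤ a := by
      rw [← iUnion_Iio, monotone_Iio.measure_iUnion]
      exact iSup_le fun t => (hXuniv ▸ mem_univ t : t ∈ X).le
    rw [hXuniv, min_eq_right hle]

end RealLine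

section Rank

variable {α : Type*} [MeasurableSpace α] {μ : Measure α} {f : α → ℝ} {T : Set α}

def rankIn (μ : Measure α) (f : α → ℝ) (T : Set α) (y : α) : ℝ≥0∞ :=
  μ (T ∩ f ⁻¹' Iio (f y))

theorem monotone_measure_inter_preimage_Iio : Monotone fun t => μ (T ∩ f ⁻¹' Iio t) :=
  fun _ _ hst => measure_mono (inter_subset_inter_right _ (preimage_mono (Iio_subset_Iio hst)))

theorem measurable_rankIn (hf : Measurable f) : Measurable (rankIn μ f T) :=
  monotone_measure_inter_preimage_Iio.measurable.comp hf

theorem measure_inter_setOf_rankIn_lt (hf : Measurable f) (hnull : ∀ t, μ (f ⁻¹' {t}) = 0)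
    (hfin : ∀ t, μ (T ∩ f ⁻¹' Iio t) ≠ ∞) (a : ℝ≥0∞) :
    μ (T ∩ {y | rankIn μ f T y < a}) = min a (μ T) := by
  set ν := (μ.restrict T).map f
  have hν : ∀ s, MeasurableSet s → ν s = μ (T ∩ f ⁻¹' s) := fun s hs => by
    rw [Measure.map_apply hf hs, Measure.restrict_apply (hf hs), inter_comm]
  have : NullSingletonClass ν :=
    ⟨fun t => (hν _ (measurableSet_singleton t)).trans
      (measure_mono_null inter_subset_right (hnull t))⟩
  have hX : MeasurableSet {t | ν (Iio t) < a} :=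
    Monotone.measurable (fun _ _ hst => measure_mono (Iio_subset_Iio hst)) measurableSet_Iio
  have hrank : ∀ y, rankIn μ f T y = ν (Iio (f y)) := fun y => (hν _ measurableSet_Iio).symm
  have hνfin : ∀ t, ν (Iio t) ≠ ∞ := fun t => hν _ measurableSet_Iio ▸ hfin t
  calc μ (T ∩ {y | rankIn μ f T y < a}) = ν {t | ν (Iio t) < a} := by
        simp only [hν _ hX, preimage_ofPred_eq, hrank]
    _ = min a (μ T) := by
        rw [measure_setOf_measure_Iio_lt hνfin, hν _ MeasurableSet.univ, preimage_univ,
          inter_univ]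

end Rank

section InitialSegment

variable {E : Type*} [NormedAddCommGroup E] [MeasurableSpace E] {μ : Measure E}

def initialSegment (μ : Measure E) (A : Set E) (m : ℝ≥0∞) : Set E :=
  A ∩ {y | rankIn μ (‖·‖) A y < m}

theorem measurableSet_initialSegment [OpensMeasurableSpace E] {A : Set E} (hA : MeasurableSet A)
    (m : ℝ≥0∞) : MeasurableSet (initialSegment μ A m) :=
  hA.inter (measurable_rankIn continuous_norm.measurable measurableSet_Iio)

theorem measure_initialSegment [NormedSpace ℝ E] [BorelSpace E] [FiniteDimensional ℝ E]
    [Nontrivial E] [μ.IsAddHaarMeasure] (A : Set E) (m : ℝ≥0∞) :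
    μ (initialSegment μ A m) = min m (μ A) := by
  refine measure_inter_setOf_rankIn_lt continuous_norm.measurable (fun t => ?_) (fun t => ?_) m
  · have : (‖·‖) ⁻¹' {t} = sphere (0 : E) t := by ext; simp
    rw [this, Measure.addHaar_sphere]
  · have : A ∩ (‖·‖) ⁻¹' Iio t ⊆ ball (0 : E) t := fun y hy => by simpa using hy.2
    exact ne_top_of_le_ne_top measure_ball_lt_top.ne (measure_mono this)

end InitialSegment

section Greedy

variable {E : Type*} [NormedAddCommGroup E] [MeasurableSpace E] {μ : Measure E}
  {ι : Type*} [Denumerable ι]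

def greedyUnion (μ : Measure E) (H : ι → Set E) (m : ι → ℝ≥0∞) : ℕ → Set E
  | 0 => ∅
  | k + 1 => greedyUnion μ H m k ∪
      initialSegment μ (H (Denumerable.ofNat ι k) \ greedyUnion μ H m k) (m (Denumerable.ofNat ι k))

theorem exists_pairwise_disjoint_subset_measure_eq [NormedSpace ℝ E] [BorelSpace E]
    [FiniteDimensional ℝ E] [Nontrivial E] [μ.IsAddHaarMeasure] {H : ι → Set E}
    (hHm : ∀ i, MeasurableSet (H i)) (hH : ∀ i, μ (H i) = ∞) {m : ι → ℝ≥0∞}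
    (hm : ∀ i, m i ≠ ∞) :
    ∃ T : ι → Set E, (∀ i, MeasurableSet (T i)) ∧ Pairwise (Disjoint on T) ∧
      (∀ i, T i ⊆ H i) ∧ ∀ i, μ (T i) = m i := by
  set U := greedyUnion μ H m
  set T := fun i => initialSegment μ (H i \ U (encode i)) (m i)
  have hU_succ : ∀ k, U (k + 1) = U k ∪ T (Denumerable.ofNat ι k) := fun k => by
    simp only [U, T, greedyUnion, Denumerable.encode_ofNat]
  have hTm : ∀ i, MeasurableSet (U (encode i)) → MeasurableSet (T i) := fun i hU =>
    measurableSet_initialSegment ((hHm i).diff hU) _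
  have hU : ∀ k, MeasurableSet (U k) ∧ μ (U k) ≠ ∞ := by
    intro k
    induction k with
    | zero => simp [U, greedyUnion]
    | succ k ih =>
      rw [hU_succ]
      refine ⟨ih.1.union (hTm _ (by rw [Denumerable.encode_ofNat]; exact ih.1)), ?_⟩
      refine ne_top_of_le_ne_top ?_ (measure_union_le _ _)
      rw [measure_initialSegment]
      exact ENNReal.add_ne_top.2 ⟨ih.2, ne_top_of_le_ne_top (hm _) (min_le_left _ _)⟩
  have hU_mono : Monotone U := monotone_nat_of_le_succ fun k => hU_succ k ▸ subset_union_left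
  have hTU : ∀ i, T i ⊆ U (encode i + 1) := fun i => by
    rw [hU_succ, Denumerable.ofNat_encode]
    exact subset_union_right
  refine ⟨T, fun i => hTm i (hU _).1, ?_, fun i => inter_subset_left.trans sdiff_subset,
    fun i => ?_⟩
  · suffices ∀ i j, encode i < encode j → Disjoint (T i) (T j) by
      intro i j hij
      rcases lt_or_gt_of_ne (encode_injective.ne hij) with h | h
      exacts [this i j h, (this j i h).symm]
    exact fun i j h => Set.disjoint_left.2 fun y hyi hyj => hyj.1.2 (hU_mono h (hTU i hyi))
  · rw [measure_initialSegment, min_eq_left]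
    rw [measure_sdiff_eq_top (hH i) (hU _).2]
    exact le_top

end Greedy

/-- `f` need not be measurable: it is only controlled on the possibly non-measurable sets `S i`,
whose measurable hulls contain the pieces `T i`. -/
theorem lintegral_le_tsum_of_le_on_toMeasurable {α ι : Type*} [MeasurableSpace α]
    {μ : Measure α} [SFinite μ] [Countable ι] {T S : ι → Set α}
    (hTm : ∀ i, MeasurableSet (T i)) (hT : Pairwise (Disjoint on T))
    (hTS : ∀ i, T i ⊆ toMeasurable μ (S i)) {f : α → ℝ≥0∞} {M : ι → ℝ≥0∞}
    (hf0 : ∀ y ∉ ⋃ i, T i, f y = 0) (hfM : ∀ i, ∀ y ∈ T i ∩ S i, f y ≤ M i) :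
    ∫⁻ y, f y ∂μ ≤ ∑' i, M i * μ (T i) := by
  rw [← iSup_lintegral_measurable_le_eq_lintegral]
  refine iSup₂_le fun g hg => iSup_le fun hgf => ?_
  have hsupp : support g ⊆ ⋃ i, T i := fun y hy =>
    by_contra fun hyT => hy (le_zero_iff.1 ((hgf y).trans (hf0 y hyT).le))
  rw [← setLIntegral_eq_of_support_subset hsupp, lintegral_iUnion hTm hT]
  refine ENNReal.tsum_le_tsum fun i => ?_
  -- The bad set is measurable, so its measure is that of its trace on `S i`, which is empty.
  have hbad : μ (T i ∩ {y | M i < g y}) = 0 := by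
    have hB : MeasurableSet (T i ∩ {y | M i < g y}) := (hTm i).inter (hg measurableSet_Ioi)
    rw [← inter_eq_self_of_subset_right (inter_subset_left.trans (hTS i)),
      Measure.measure_toMeasurable_inter_of_sFinite hB, ← measure_empty (μ := μ)]
    congr 1
    refine eq_empty_of_forall_notMem fun y ⟨hyS, hyT, hy⟩ => ?_
    exact (hy.trans_le ((hgf y).trans (hfM i y ⟨hyT, hyS⟩))).false
  have hae : ∀ᵐ y ∂μ.restrict (T i), g y ≤ M i := by
    rw [ae_restrict_iff' (hTm i)]
    filter_upwards [measure_eq_zero_iff_ae_notMem.1 hbad] with y hy hyT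
    exact not_lt.1 fun h => hy ⟨hyT, h⟩
  exact (lintegral_mono_ae hae).trans (setLIntegral_const _ _).le

section Dyadic

theorem tsum_indicator_apply_of_mem {α ι M : Type*} [AddCommMonoid M] [TopologicalSpace M]
    {T : ι → Set α} (hT : Pairwise (Disjoint on T)) (F : ι → α → M) {n : ι} {y : α} (hy : y ∈ T n) :
    ∑' k, (T k).indicator (F k) y = F n y := by
  rw [tsum_eq_single n fun k hk =>
    indicator_of_notMem (fun hyk => disjoint_left.1 (hT hk) hyk hy) _, indicator_of_mem hy]

theorem tsum_min_sub_ofReal_zpow_two (a : ℝ) :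
    ∑' n : ℤ, min (ENNReal.ofReal a - ENNReal.ofReal (2 ^ n)) (ENNReal.ofReal (2 ^ n)) =
      ENNReal.ofReal a := by
  have hterm : ∀ n : ℤ, min (ENNReal.ofReal a - ENNReal.ofReal (2 ^ n)) (ENNReal.ofReal (2 ^ n)) =
      volume (Ico ((2 : ℝ) ^ n) (2 ^ (n + 1)) ∩ Iio a) := fun n => by
    rw [Ico_inter_Iio, Real.volume_Ico, ← ENNReal.ofReal_sub _ (zpow_nonneg zero_le_two n),
      ← ENNReal.ofReal_min, zpow_add_one₀ two_ne_zero, ← min_sub_sub_right, min_comm]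
    ring_nf
  have hdisj : Pairwise (Disjoint on fun n : ℤ => Ico ((2 : ℝ) ^ n) (2 ^ (n + 1)) ∩ Iio a) := by
    refine (pairwise_disjoint_on _).2 fun m n hmn => disjoint_left.2 fun x hxm hxn => ?_
    have : (2 : ℝ) ^ (m + 1) ≤ 2 ^ n := zpow_le_zpow_right₀ one_le_two hmn
    linarith [hxm.1.2, hxn.1.1]
  have hunion : ⋃ n : ℤ, Ico ((2 : ℝ) ^ n) (2 ^ (n + 1)) ∩ Iio a = Ioo 0 a := by
    refine Subset.antisymm
      (iUnion_subset fun n x hx => ⟨(zpow_pos two_pos n).trans_le hx.1.1, hx.2⟩) fun x hx => ?_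
    obtain ⟨n, hn⟩ := exists_mem_Ico_zpow hx.1 one_lt_two
    exact mem_iUnion.2 ⟨n, hn, hx.2⟩
  simp_rw [hterm]
  rw [← measure_iUnion hdisj fun n => measurableSet_Ico.inter measurableSet_Iio, hunion,
    Real.volume_Ioo, sub_zero]

variable {E : Type*} [NormedAddCommGroup E] [MeasurableSpace E] {μ : Measure E}

def dyadicRank (μ : Measure E) (T : ℤ → Set E) (y : E) : ℝ≥0∞ :=
  ∑' n, (T n).indicator (fun y => ENNReal.ofReal (2 ^ n) + rankIn μ (‖·‖) (T n) y) y

theorem measurable_dyadicRank [OpensMeasurableSpace E] {T : ℤ → Set E}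
    (hTm : ∀ n, MeasurableSet (T n)) : Measurable (dyadicRank μ T) :=
  Measurable.tsum fun n =>
    (measurable_const.add (measurable_rankIn continuous_norm.measurable)).indicator (hTm n)

theorem dyadicRank_of_mem {T : ℤ → Set E} (hT : Pairwise (Disjoint on T)) {n : ℤ} {y : E}
    (hy : y ∈ T n) : dyadicRank μ T y = ENNReal.ofReal (2 ^ n) + rankIn μ (‖·‖) (T n) y :=
  tsum_indicator_apply_of_mem hT _ hy

theorem measure_iUnion_inter_setOf_dyadicRank_lt [NormedSpace ℝ E] [BorelSpace E]
    [FiniteDimensional ℝ E] [Nontrivial E] [μ.IsAddHaarMeasure] {T : ℤ → Set E}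
    (hTm : ∀ n, MeasurableSet (T n)) (hT : Pairwise (Disjoint on T))
    (hTμ : ∀ n, μ (T n) = ENNReal.ofReal (2 ^ n)) (a : ℝ) :
    μ ((⋃ n, T n) ∩ {y | dyadicRank μ T y < ENNReal.ofReal a}) = ENNReal.ofReal a := by
  have hpiece : ∀ n, T n ∩ {y | dyadicRank μ T y < ENNReal.ofReal a} =
      initialSegment μ (T n) (ENNReal.ofReal a - ENNReal.ofReal (2 ^ n)) := fun n => by
    ext y
    simp only [initialSegment, mem_inter_iff, mem_ofPred_eq, and_congr_right_iff]
    intro hy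
    rw [dyadicRank_of_mem hT hy, lt_tsub_iff_left]
  have hdisj : Pairwise (Disjoint on fun n =>
      initialSegment μ (T n) (ENNReal.ofReal a - ENNReal.ofReal (2 ^ n))) :=
    fun m n hmn => (hT hmn).mono inter_subset_left inter_subset_left
  rw [iUnion_inter, iUnion_congr hpiece,
    measure_iUnion hdisj fun n => measurableSet_initialSegment (hTm n) _]
  simp_rw [measure_initialSegment, hTμ]
  exact tsum_min_sub_ofReal_zpow_two a

end Dyadic

section Kernel

variable {E : Type*} [NormedAddCommGroup E] [MeasurableSpace E] {μ : Measure E}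

/-- Since `μ (ball 0 r) = r ^ d * μ (ball 0 1)`, for `q = (d + s) / d` this kernel exceeds
`r ^ (-d - s)` exactly where `dyadicRank < μ (ball 0 r)`: it is a rearrangement of
`|y| ^ (-d - s)`. -/
def dyadicKernel (μ : Measure E) (T : ℤ → Set E) (q : ℝ) (y : E) : ℝ≥0∞ :=
  (⋃ n, T n).indicator (fun y => (dyadicRank μ T y / μ (ball 0 1)) ^ (-q)) y

theorem measurable_dyadicKernel [OpensMeasurableSpace E] {T : ℤ → Set E}
    (hTm : ∀ n, MeasurableSet (T n)) (q : ℝ) : Measurable (dyadicKernel μ T q) :=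
  (((measurable_dyadicRank hTm).div_const _).pow_const _).indicator (MeasurableSet.iUnion hTm)

theorem dyadicKernel_eq_zero {T : ℤ → Set E} (q : ℝ) {y : E} (hy : y ∉ ⋃ n, T n) :
    dyadicKernel μ T q y = 0 :=
  indicator_of_notMem hy _

def dyadicBound (μ : Measure E) (q : ℝ) (n : ℤ) : ℝ≥0∞ :=
  (ENNReal.ofReal (2 ^ n) / μ (ball 0 1)) ^ (-q)

theorem dyadicBound_ne_top [NormedSpace ℝ E] [FiniteDimensional ℝ E]
    [μ.IsAddHaarMeasure] (q : ℝ) (n : ℤ) : dyadicBound μ q n ≠ ∞ := by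
  have h₀ : ENNReal.ofReal (2 ^ n) / μ (ball 0 1) ≠ 0 :=
    ENNReal.div_ne_zero.2 ⟨(ENNReal.ofReal_pos.2 (zpow_pos two_pos n)).ne', measure_ball_lt_top.ne⟩
  exact ENNReal.rpow_ne_top_of_ne_zero h₀
    (ENNReal.div_ne_top ENNReal.ofReal_ne_top (measure_ball_pos _ _ one_pos).ne')

theorem dyadicKernel_le {T : ℤ → Set E} (hT : Pairwise (Disjoint on T)) {q : ℝ} (hq : 0 ≤ q)
    {n : ℤ} {y : E} (hy : y ∈ T n) : dyadicKernel μ T q y ≤ dyadicBound μ q n := by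
  rw [dyadicKernel, dyadicBound, indicator_of_mem (mem_iUnion.2 ⟨n, hy⟩), dyadicRank_of_mem hT hy,
    ENNReal.rpow_neg, ENNReal.rpow_neg]
  gcongr
  exact le_self_add

theorem lintegral_ofReal_mul_dyadicKernel_le [SFinite μ] {T : ℤ → Set E}
    (hTm : ∀ n, MeasurableSet (T n)) (hT : Pairwise (Disjoint on T)) {g : E → ℝ} {lam : ℤ → ℝ}
    (hTg : ∀ n, T n ⊆ toMeasurable μ {y | g y < lam n}) {q : ℝ} (hq : 0 ≤ q) :
    ∫⁻ y, ENNReal.ofReal (g y) * dyadicKernel μ T q y ∂μ ≤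
      ∑' n, ENNReal.ofReal (lam n) * dyadicBound μ q n * μ (T n) := by
  refine lintegral_le_tsum_of_le_on_toMeasurable hTm hT hTg (fun y hy => ?_) fun n y hy => ?_
  · rw [dyadicKernel_eq_zero _ hy, mul_zero]
  · exact mul_le_mul' (ENNReal.ofReal_le_ofReal hy.2.le) (dyadicKernel_le hT hq hy.1)

theorem measure_setOf_lt_dyadicKernel [NormedSpace ℝ E] [BorelSpace E] [FiniteDimensional ℝ E]
    [Nontrivial E] [μ.IsAddHaarMeasure] {T : ℤ → Set E}
    (hTm : ∀ n, MeasurableSet (T n)) (hT : Pairwise (Disjoint on T))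
    (hTμ : ∀ n, μ (T n) = ENNReal.ofReal (2 ^ n)) {q : ℝ} (hq : 0 < q) (a : ℝ) :
    μ {y | (ENNReal.ofReal a / μ (ball 0 1)) ^ (-q) < dyadicKernel μ T q y} = ENNReal.ofReal a := by
  have hball₀ : μ (ball (0 : E) 1) ≠ 0 := (measure_ball_pos μ 0 one_pos).ne'
  have hball : μ (ball (0 : E) 1) ≠ ∞ := measure_ball_lt_top.ne
  have hlevel : {y | (ENNReal.ofReal a / μ (ball 0 1)) ^ (-q) < dyadicKernel μ T q y} =
      (⋃ n, T n) ∩ {y | dyadicRank μ T y < ENNReal.ofReal a} := by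
    ext y
    by_cases hy : y ∈ ⋃ n, T n
    · simp only [dyadicKernel, indicator_of_mem hy, mem_ofPred_eq, mem_inter_iff, hy, true_and,
        ENNReal.rpow_neg, ENNReal.inv_lt_inv, ENNReal.rpow_lt_rpow_iff hq,
        ENNReal.div_lt_div_iff_left hball₀ hball]
    · simp [dyadicKernel_eq_zero q hy, hy]
  rw [hlevel, measure_iUnion_inter_setOf_dyadicRank_lt hTm hT hTμ]

end Kernel

theorem dyadicKernel_mem_admissibleKernel {d : ℕ} (hd : 1 ≤ d) {s : ℝ} (hs : 0 < (d : ℝ) + s)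
    {T : ℤ → Set (Ed d)} (hTm : ∀ n, MeasurableSet (T n)) (hT : Pairwise (Disjoint on T))
    (hTμ : ∀ n, volume (T n) = ENNReal.ofReal (2 ^ n)) :
    dyadicKernel volume T ((d + s) / d) ∈ admissibleKernel d s := by
  have : Nonempty (Fin d) := ⟨⟨0, hd⟩⟩
  refine ⟨measurable_dyadicKernel hTm _, fun r hr => ?_⟩
  have hball :
      volume (ball (0 : Ed d) r) = ENNReal.ofReal (r ^ d) * volume (ball (0 : Ed d) 1) := by
    rw [Measure.addHaar_ball _ _ hr.le, finrank_euclideanSpace_fin]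
  have hθ : ENNReal.ofReal (r ^ (-(d : ℝ) - s)) =
      (volume (ball (0 : Ed d) r) / volume (ball (0 : Ed d) 1)) ^ (-(((d : ℝ) + s) / d)) := by
    have hd₀ : (d : ℝ) ≠ 0 := by positivity
    rw [hball, ENNReal.mul_div_cancel_right (measure_ball_pos volume 0 one_pos).ne'
      measure_ball_lt_top.ne, ENNReal.ofReal_rpow_of_pos (pow_pos hr d), ← Real.rpow_natCast,
      ← Real.rpow_mul hr.le]
    congr 2
    field_simp
    ring
  obtain ⟨a, ha⟩ : ∃ a : ℝ, ENNReal.ofReal a = volume (ball (0 : Ed d) r) :=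
    ⟨_, ENNReal.ofReal_toReal measure_ball_lt_top.ne⟩
  rw [hθ, ← ha]
  exact measure_setOf_lt_dyadicKernel hTm hT hTμ (by positivity) a

theorem stmt3_general (d : ℕ) (hd : 1 ≤ d) (s : ℝ) (hs : s ∈ Set.Ioo (1 : ℝ) 2)
    (u : Ed d → ℝ) (x b : Ed d)
    (hinf : ∀ lam : ℝ, 0 < lam → volume {y : Ed d | utilde d u x b y < lam} = ⊤) :
    (⨅ K ∈ admissibleKernel d s, kernelInt d u x b K) = 0 := by
  have : Nonempty (Fin d) := ⟨⟨0, hd⟩⟩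
  have hs₀ : 0 < (d : ℝ) + s := by linarith [hs.1, (Nat.cast_nonneg d : (0 : ℝ) ≤ d)]
  set q := ((d : ℝ) + s) / d
  refine nonpos_iff_eq_zero.1 (le_of_forall_gt_imp_ge_of_dense fun ε hε => ?_)
  obtain ⟨lam, hlam, hlamε⟩ := ENNReal.exists_pos_tsum_mul_lt_of_countable hε.ne'
    (fun n => dyadicBound (volume : Measure (Ed d)) q n * ENNReal.ofReal (2 ^ n))
    fun n => ENNReal.mul_ne_top (dyadicBound_ne_top q n) ENNReal.ofReal_ne_top
  obtain ⟨T, hTm, hT, hTH, hTμ⟩ := exists_pairwise_disjoint_subset_measure_eq (μ := volume)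
    (H := fun n => toMeasurable volume {y | utilde d u x b y < lam n})
    (fun n => measurableSet_toMeasurable _ _)
    (fun n => (measure_toMeasurable _).trans (hinf _ (hlam n)))
    (m := fun n => ENNReal.ofReal (2 ^ n)) fun n => ENNReal.ofReal_ne_top
  calc (⨅ K ∈ admissibleKernel d s, kernelInt d u x b K)
      ≤ kernelInt d u x b (dyadicKernel volume T q) :=
        iInf₂_le _ (dyadicKernel_mem_admissibleKernel hd hs₀ hTm hT hTμ)
    _ ≤ ∑' n, ENNReal.ofReal (lam n) * dyadicBound volume q n * volume (T n) :=
        lintegral_ofReal_mul_dyadicKernel_le hTm hT hTH (by positivity)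
    _ = ∑' n, dyadicBound volume q n * ENNReal.ofReal (2 ^ n) * lam n := by
        simp_rw [hTμ, ENNReal.ofReal_coe_nnreal]
        exact tsum_congr fun n => by ring
    _ ≤ ε := hlamε.le

/-- If every sublevel set `{ũ_{x,b} < λ}`, `λ > 0`, has infinite measure, then the infimum
over all admissible kernels `K` of `∫ ũ_{x,b}(y) K(y) dy` equals zero. -/
theorem stmt3 (d : ℕ) (hd : 1 ≤ d) (s : ℝ) (hs : s ∈ Set.Ioo (1 : ℝ) 2)
    (u : Ed d → ℝ) (x b : Ed d) (hb : b ∈ subdiff d u x)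
    (hinf : ∀ lam : ℝ, 0 < lam → volume {y : Ed d | utilde d u x b y < lam} = ⊤) :
    (⨅ K ∈ admissibleKernel d s, kernelInt d u x b K) = 0 :=
  stmt3_general d hd s hs u x b hinf
end
end

section
/- Let u, v : ℝ^d → ℝ be continuous functions and x ∈ ℝ^d, and assume MA u(x) > -∞ and MA v(x) > -∞ (so both lie in [0,∞]). Then MA((u+v)/2)(x) ≥ (MA u(x) + MA v(x))/2, with the arithmetic of [0,∞]. -/
open MeasureTheory Filter Metric Set
open scoped ENNReal NNReal Topology

noncomputable section

/-!
A midpoint of supporting slopes `b₁ ∈ ∂u(x)`, `b₂ ∈ ∂v(x)` supports `(u + v)/2` at `x`, and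
`ũ` is affine in the pair `(u, b)`, so for every kernel the integral for `(u + v)/2` at the
midpoint slope dominates the mean of the two integrals (the lower Lebesgue integral is
superadditive). Taking the infimum over kernels and then the suprema over slopes gives the
concavity inequality.
-/

def kernelInf (d : ℕ) (s : ℝ) (u : Ed d → ℝ) (x b : Ed d) : ℝ≥0∞ :=
  ⨅ K ∈ admissibleKernel d s, kernelInt d u x b K

theorem EReal.coe_ennreal_iSup {ι : Sort*} [Nonempty ι] (f : ι → ℝ≥0∞) :
    ((⨆ i, f i : ℝ≥0∞) : EReal) = ⨆ i, (f i : EReal) :=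
  Monotone.map_ciSup_of_continuousAt continuous_coe_ennreal_ereal.continuousAt
    (fun _ _ h => EReal.coe_ennreal_le_coe_ennreal_iff.2 h)

theorem subdiff_nonempty_of_MAop_ne_bot {d : ℕ} {s : ℝ} {u : Ed d → ℝ} {x : Ed d}
    (h : MAop d s u x ≠ ⊥) : (subdiff d u x).Nonempty := by
  rw [nonempty_iff_ne_empty]
  rintro hempty
  exact h (by rw [MAop, if_pos hempty])

theorem MAop_eq_iSup_kernelInf {d : ℕ} {s : ℝ} {u : Ed d → ℝ} {x : Ed d}
    (h : (subdiff d u x).Nonempty) :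
    MAop d s u x = ((⨆ b ∈ subdiff d u x, kernelInf d s u x b : ℝ≥0∞) : EReal) := by
  have : Nonempty (subdiff d u x) := h.to_subtype
  rw [MAop, if_neg h.ne_empty, iSup_subtype', iSup_subtype' (p := fun b => b ∈ subdiff d u x),
    EReal.coe_ennreal_iSup]
  rfl

theorem mem_subdiff_iff_utilde_nonneg {d : ℕ} {u : Ed d → ℝ} {x b : Ed d} :
    b ∈ subdiff d u x ↔ ∀ y, 0 ≤ utilde d u x b y := by
  refine ⟨fun hb y => ?_, fun hb z => ?_⟩
  · have := hb (x + y)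
    rw [add_sub_cancel_left] at this
    rw [utilde]
    linarith
  · have := hb (z - x)
    rw [utilde, add_sub_cancel] at this
    linarith

theorem utilde_midpoint (d : ℕ) (u v : Ed d → ℝ) (x b₁ b₂ y : Ed d) :
    utilde d (fun z => (u z + v z) / 2) x ((2 : ℝ)⁻¹ • (b₁ + b₂)) y
      = (utilde d u x b₁ y + utilde d v x b₂ y) / 2 := by
  simp only [utilde, real_inner_smul_left, inner_add_left]
  ring

theorem midpoint_mem_subdiff {d : ℕ} {u v : Ed d → ℝ} {x b₁ b₂ : Ed d}
    (h₁ : b₁ ∈ subdiff d u x) (h₂ : b₂ ∈ subdiff d v x) :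
    (2 : ℝ)⁻¹ • (b₁ + b₂) ∈ subdiff d (fun z => (u z + v z) / 2) x := by
  refine mem_subdiff_iff_utilde_nonneg.2 fun y => ?_
  rw [utilde_midpoint]
  have := mem_subdiff_iff_utilde_nonneg.1 h₁ y
  have := mem_subdiff_iff_utilde_nonneg.1 h₂ y
  positivity

theorem kernelInt_midpoint_ge {d : ℕ} {u v : Ed d → ℝ} {x b₁ b₂ : Ed d}
    (h₁ : b₁ ∈ subdiff d u x) (h₂ : b₂ ∈ subdiff d v x) (K : Ed d → ℝ≥0∞) :
    2⁻¹ * (kernelInt d u x b₁ K + kernelInt d v x b₂ K)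
      ≤ kernelInt d (fun z => (u z + v z) / 2) x ((2 : ℝ)⁻¹ • (b₁ + b₂)) K := by
  have hpoint : ∀ y, ENNReal.ofReal (utilde d (fun z => (u z + v z) / 2) x
      ((2 : ℝ)⁻¹ • (b₁ + b₂)) y) * K y
        = 2⁻¹ * (ENNReal.ofReal (utilde d u x b₁ y) * K y
          + ENNReal.ofReal (utilde d v x b₂ y) * K y) := by
    intro y
    rw [utilde_midpoint, div_eq_inv_mul, ENNReal.ofReal_mul (by norm_num),
      ENNReal.ofReal_add (mem_subdiff_iff_utilde_nonneg.1 h₁ y)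
        (mem_subdiff_iff_utilde_nonneg.1 h₂ y),
      ENNReal.ofReal_inv_of_pos two_pos, ENNReal.ofReal_ofNat]
    ring
  simp only [kernelInt, hpoint]
  rw [lintegral_const_mul' _ _ (by norm_num)]
  gcongr
  exact le_lintegral_add _ _

theorem kernelInf_midpoint_ge {d : ℕ} {s : ℝ} {u v : Ed d → ℝ} {x b₁ b₂ : Ed d}
    (h₁ : b₁ ∈ subdiff d u x) (h₂ : b₂ ∈ subdiff d v x) :
    kernelInf d s u x b₁ + kernelInf d s v x b₂
      ≤ 2 * kernelInf d s (fun z => (u z + v z) / 2) x ((2 : ℝ)⁻¹ • (b₁ + b₂)) := by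
  have hmean : 2⁻¹ * (kernelInf d s u x b₁ + kernelInf d s v x b₂)
      ≤ kernelInf d s (fun z => (u z + v z) / 2) x ((2 : ℝ)⁻¹ • (b₁ + b₂)) := by
    refine le_iInf₂ fun K hK => le_trans ?_ (kernelInt_midpoint_ge h₁ h₂ K)
    gcongr <;> exact biInf_le _ hK
  calc kernelInf d s u x b₁ + kernelInf d s v x b₂
      = 2 * (2⁻¹ * (kernelInf d s u x b₁ + kernelInf d s v x b₂)) := by
        rw [← mul_assoc, ENNReal.mul_inv_cancel two_ne_zero ENNReal.ofNat_ne_top, one_mul]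
    _ ≤ _ := by gcongr

theorem EReal.add_mul_half_le_of_le_two_mul {a b c : ℝ≥0∞} (h : a + b ≤ 2 * c) :
    ((a : EReal) + b) * (((1 : ℝ) / 2 : ℝ) : EReal) ≤ c := by
  have hhalf : (((1 : ℝ) / 2 : ℝ) : EReal) = ((2⁻¹ : ℝ≥0∞) : EReal) := by
    rw [← one_div, ← ENNReal.ofReal_one, ← ENNReal.ofReal_ofNat 2,
      ← ENNReal.ofReal_div_of_pos two_pos, EReal.coe_ennreal_ofReal]
    norm_num
  rw [hhalf, ← EReal.coe_ennreal_add, ← EReal.coe_ennreal_mul,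
    EReal.coe_ennreal_le_coe_ennreal_iff, ← div_eq_mul_inv]
  exact ENNReal.div_le_of_le_mul' h

theorem stmt8_general (d : ℕ) (s : ℝ)
    (u v : Ed d → ℝ) (x : Ed d)
    (hMu : MAop d s u x ≠ ⊥) (hMv : MAop d s v x ≠ ⊥) :
    (MAop d s u x + MAop d s v x) * (((1 : ℝ) / 2 : ℝ) : EReal)
      ≤ MAop d s (fun y => (u y + v y) / 2) x := by
  obtain ⟨b₁, h₁⟩ := subdiff_nonempty_of_MAop_ne_bot hMu
  obtain ⟨b₂, h₂⟩ := subdiff_nonempty_of_MAop_ne_bot hMv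
  rw [MAop_eq_iSup_kernelInf ⟨b₁, h₁⟩, MAop_eq_iSup_kernelInf ⟨b₂, h₂⟩,
    MAop_eq_iSup_kernelInf ⟨_, midpoint_mem_subdiff h₁ h₂⟩]
  refine EReal.add_mul_half_le_of_le_two_mul
    (ENNReal.biSup_add_biSup_le ⟨b₁, h₁⟩ ⟨b₂, h₂⟩ fun c₁ hc₁ c₂ hc₂ => ?_)
  calc kernelInf d s u x c₁ + kernelInf d s v x c₂
      ≤ 2 * kernelInf d s (fun y => (u y + v y) / 2) x ((2 : ℝ)⁻¹ • (c₁ + c₂)) :=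
        kernelInf_midpoint_ge hc₁ hc₂
    _ ≤ _ := by gcongr; exact le_biSup _ (midpoint_mem_subdiff hc₁ hc₂)

/-- Concavity of the nonlocal Monge–Ampère operator:
`MA((u+v)/2)(x) ≥ (MA u(x) + MA v(x))/2` whenever both values are `> -∞`. -/
theorem stmt8 (d : ℕ) (hd : 1 ≤ d) (s : ℝ) (hs : s ∈ Set.Ioo (1 : ℝ) 2)
    (u v : Ed d → ℝ) (hu : Continuous u) (hv : Continuous v) (x : Ed d)
    (hMu : MAop d s u x ≠ ⊥) (hMv : MAop d s v x ≠ ⊥) :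
    (MAop d s u x + MAop d s v x) * (((1 : ℝ) / 2 : ℝ) : EReal)
      ≤ MAop d s (fun y => (u y + v y) / 2) x :=
  stmt8_general d s u v x hMu hMv
end
end

section
/- Let u, v : ℝ^d → ℝ be continuous, let Ω ⊂ ℝ^d be open and bounded, and let f : ℝ^d → ℝ. Assume that for every x ∈ Ω one has MA u(x) ≥ f(x) + u(x) and MA v(x) ≤ f(x) + v(x) (inequalities in [-∞,+∞]), and that u(x) ≤ v(x) for all x ∈ ℝ^d \ Ω. Then u ≤ v on all of ℝ^d. -/
open MeasureTheory Filter Metric Set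
open scoped ENNReal NNReal Topology

noncomputable section

/-!
If `u > v` somewhere, then `u - v` attains a positive maximum at some `x₀ ∈ Ω`, since it is
continuous, `Ω` is bounded and `u ≤ v` off `Ω`. At such a point every supporting plane of `u` is
one of `v`, and `ũ_{x₀,b} ≤ ṽ_{x₀,b}`, so `MA u(x₀) ≤ MA v(x₀)`. The equations then give
`f + u ≤ f + v` at `x₀`, a contradiction.
-/

theorem exists_mem_forall_le_of_nonpos_off {X : Type*} [PseudoMetricSpace X] [ProperSpace X]
    {w : X → ℝ} {Ω : Set X} (hw : Continuous w) (hΩ : Bornology.IsBounded Ω)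
    (hout : ∀ x ∉ Ω, w x ≤ 0) {x₁ : X} (hx₁ : 0 < w x₁) :
    ∃ x₀ ∈ Ω, ∀ z, w z ≤ w x₀ := by
  have hx₁Ω : x₁ ∈ Ω := by_contra fun h => (hout x₁ h).not_gt hx₁
  obtain ⟨x₀, hx₀, hmax⟩ :=
    hΩ.isCompact_closure.exists_isMaxOn ⟨x₁, subset_closure hx₁Ω⟩ hw.continuousOn
  have hpos : 0 < w x₀ := hx₁.trans_le (hmax (subset_closure hx₁Ω))
  have hle : ∀ z, w z ≤ w x₀ := fun z => by
    by_cases hz : z ∈ Ω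
    · exact hmax (subset_closure hz)
    · exact (hout z hz).trans hpos.le
  exact ⟨x₀, by_contra fun h => (hout x₀ h).not_gt hpos, hle⟩

section MongeAmpere

variable {d : ℕ} {u v : Ed d → ℝ} {x : Ed d}

theorem subdiff_subset_of_forall_sub_le (h : ∀ z, u z - v z ≤ u x - v x) :
    subdiff d u x ⊆ subdiff d v x := fun b hb z => by
  linarith [hb z, h z]

theorem utilde_le_of_forall_sub_le (h : ∀ z, u z - v z ≤ u x - v x) (b y : Ed d) :
    utilde d u x b y ≤ utilde d v x b y := by
  simp only [utilde]
  linarith [h (x + y)]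

theorem kernelInt_mono {b : Ed d} (h : ∀ y, utilde d u x b y ≤ utilde d v x b y)
    (K : Ed d → ℝ≥0∞) : kernelInt d u x b K ≤ kernelInt d v x b K :=
  lintegral_mono fun y => mul_le_mul_left (ENNReal.ofReal_le_ofReal (h y)) _

theorem MAop_mono_of_forall_sub_le (s : ℝ) (h : ∀ z, u z - v z ≤ u x - v x) :
    MAop d s u x ≤ MAop d s v x := by
  have hsub := subdiff_subset_of_forall_sub_le h
  by_cases hu : subdiff d u x = ∅
  · rw [MAop, if_pos hu]
    exact bot_le
  have hv : subdiff d v x ≠ ∅ := fun hv => hu (subset_empty_iff.1 (hv ▸ hsub))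
  rw [MAop, MAop, if_neg hu, if_neg hv]
  refine iSup₂_le fun b hb => le_iSup₂_of_le b (hsub hb) ?_
  exact EReal.coe_ennreal_le_coe_ennreal_iff.2 <| iInf₂_mono fun K _ =>
    kernelInt_mono (utilde_le_of_forall_sub_le h b) K

end MongeAmpere

theorem stmt14_general (d : ℕ) (s : ℝ)
    (u v f : Ed d → ℝ) (hu : Continuous u) (hv : Continuous v)
    (Ω : Set (Ed d)) (hΩb : Bornology.IsBounded Ω)
    (hsub : ∀ x ∈ Ω, ((f x + u x : ℝ) : EReal) ≤ MAop d s u x)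
    (hsuper : ∀ x ∈ Ω, MAop d s v x ≤ ((f x + v x : ℝ) : EReal))
    (hbdry : ∀ x ∉ Ω, u x ≤ v x) :
    ∀ x, u x ≤ v x := by
  by_contra! ⟨x₁, hx₁⟩
  obtain ⟨x₀, hx₀, hmax⟩ := exists_mem_forall_le_of_nonpos_off (w := fun x => u x - v x)
    (hu.sub hv) hΩb (fun x hx => sub_nonpos.2 (hbdry x hx)) (sub_pos.2 hx₁)
  have hMA : ((f x₀ + u x₀ : ℝ) : EReal) ≤ ((f x₀ + v x₀ : ℝ) : EReal) :=
    (hsub x₀ hx₀).trans ((MAop_mono_of_forall_sub_le s hmax).trans (hsuper x₀ hx₀))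
  linarith [EReal.coe_le_coe_iff.1 hMA, hmax x₁]

/-- Comparison principle: if `MA u - u ≥ f ≥ MA v - v` pointwise in a bounded open set `Ω`
and `u ≤ v` outside `Ω`, then `u ≤ v` everywhere. -/
theorem stmt14 (d : ℕ) (hd : 1 ≤ d) (s : ℝ) (hs : s ∈ Set.Ioo (1 : ℝ) 2)
    (u v f : Ed d → ℝ) (hu : Continuous u) (hv : Continuous v)
    (Ω : Set (Ed d)) (hΩo : IsOpen Ω) (hΩb : Bornology.IsBounded Ω)
    (hsub : ∀ x ∈ Ω, ((f x + u x : ℝ) : EReal) ≤ MAop d s u x)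
    (hsuper : ∀ x ∈ Ω, MAop d s v x ≤ ((f x + v x : ℝ) : EReal))
    (hbdry : ∀ x ∉ Ω, u x ≤ v x) :
    ∀ x, u x ≤ v x :=
  stmt14_general d s u v f hu hv Ω hΩb hsub hsuper hbdry
end
end
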